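/- Let 0 < δ < 1 with 1/δ ∈ ℕ, z ∈ ℤ², ρ ∈ Γ, and let 1 < p < ∞ with p' ∈ ℕ. Let w be a weight with [w]_{A^S_{p,ρ,z}} < ∞, where the side selection is the one produced by the face-selection algorithm (so that each ℓ_i meets at most A·δ^{−5/4} of the sets ℓ_1,…,ℓ_u for an absolute constant A). Then there is a constant C, independent of δ, w, f, ρ, z, such that ‖\tilde M_{ρ,δ} f‖_{L^p(Q_z,w)} ≤ C·δ^{−5/(4p)}·[w]_{A^S_{p,ρ,z}}^{1/p}·‖f‖_{L^p(7Q_z,w)} for all f. -/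

import Mathlib

open MeasureTheory Metric Set
open scoped ENNReal NNReal

noncomputable section

/-- Index of a `k`-face of an axis-parallel cube in `ℝⁿ`: a set of `k` "free" coordinates
together with a sign choice for the remaining coordinates (only the signs of coordinates
outside the free set matter). -/
abbrev FaceIdx (n k : ℕ) := {T : Finset (Fin n) // T.card = k} × (Fin n → Bool)

/-- The `k`-face of the axis-parallel cube centered at `x` with side length `2 r`
corresponding to the face index `F`. -/
def kFace {n : ℕ} (k : ℕ) (x : Fin n → ℝ) (r : ℝ) (F : FaceIdx n k) : Set (Fin n → ℝ) :=
  {y | (∀ i ∈ F.1.1, |y i - x i| ≤ r) ∧ ∀ i ∉ F.1.1, y i = x i + (if F.2 i then r else -r)}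

/-- The `δ`-neighborhood of a `k`-face. -/
def faceNbhd {n : ℕ} (k : ℕ) (δ : ℝ) (x : Fin n → ℝ) (r : ℝ) (F : FaceIdx n k) :
    Set (Fin n → ℝ) :=
  Metric.cthickening δ (kFace k x r F)

/-- The `δ`-neighborhood of the whole `k`-skeleton. -/
def skelNbhd {n : ℕ} (k : ℕ) (δ : ℝ) (x : Fin n → ℝ) (r : ℝ) : Set (Fin n → ℝ) :=
  ⋃ F : FaceIdx n k, faceNbhd k δ x r F

/-- The `k`-skeleton maximal function with width `δ` (with values in `ℝ≥0∞`):
`M^k_δ f (x) = sup_{1 ≤ r ≤ 2} min_j ⨍_{S^j_{k,δ}(x,r)} |f|`. -/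
def skelMax (n k : ℕ) (δ : ℝ) (f : (Fin n → ℝ) → ℝ) (x : Fin n → ℝ) : ℝ≥0∞ :=
  ⨆ r ∈ Set.Icc (1 : ℝ) 2, ⨅ F : FaceIdx n k,
    (volume (faceNbhd k δ x r F))⁻¹ * ∫⁻ y in faceNbhd k δ x r F, (‖f y‖₊ : ℝ≥0∞)

/-- `L^p` norm of an `ℝ≥0∞`-valued function. -/
def lpNormE {α : Type*} [MeasurableSpace α] (g : α → ℝ≥0∞) (p : ℝ) (μ : Measure α) : ℝ≥0∞ :=
  (∫⁻ x, g x ^ p ∂μ) ^ (1 / p)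

/-- The measure `w(x) dx` associated to a weight `w`. -/
def wMeasure {n : ℕ} (w : (Fin n → ℝ) → ℝ) : Measure (Fin n → ℝ) :=
  volume.withDensity fun x => ENNReal.ofReal (w x)

/-- Average of `g` over the set `A` (with respect to Lebesgue measure). -/
def ravg {n : ℕ} (A : Set (Fin n → ℝ)) (g : (Fin n → ℝ) → ℝ) : ℝ :=
  (volume A).toReal⁻¹ * ∫ y in A, g y

/-- The axis-parallel cube with center `c` and side length `s`. -/
def cube {n : ℕ} (c : Fin n → ℝ) (s : ℝ) : Set (Fin n → ℝ) :=
  {y | ∀ j, |y j - c j| ≤ s / 2}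

/-- The closed unit cube `Q_z` with lower-left vertex `z`. -/
def unitCube {n : ℕ} (z : Fin n → ℤ) : Set (Fin n → ℝ) :=
  {y | ∀ j, (z j : ℝ) ≤ y j ∧ y j ≤ (z j : ℝ) + 1}

/-- The cube `7 Q_z`: same center as `Q_z`, side length `7`. -/
def sevenCube {n : ℕ} (z : Fin n → ℤ) : Set (Fin n → ℝ) :=
  {y | ∀ j, |y j - ((z j : ℝ) + 1 / 2)| ≤ 7 / 2}

/-- The (half-open) grid cell `Q_z(m)` of side length `δ = 1/N` inside `Q_z`. -/
def gridCell {n : ℕ} (N : ℕ) (z : Fin n → ℤ) (m : Fin n → Fin N) : Set (Fin n → ℝ) :=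
  {y | ∀ j, (z j : ℝ) + (m j : ℝ) / N ≤ y j ∧ y j < (z j : ℝ) + ((m j : ℝ) + 1) / N}

/-- The center `x_m` of the grid cell `Q_z(m)`. -/
def gridCenter {n : ℕ} (N : ℕ) (z : Fin n → ℤ) (m : Fin n → Fin N) : Fin n → ℝ :=
  fun j => (z j : ℝ) + ((m j : ℝ) + 1 / 2) / N

/-- Membership in `Γ`: a radius function with values in `[1,2] ∩ δ ℤ`, `δ = 1/N`. -/
def inGamma {n : ℕ} (N : ℕ) (ρ : (Fin n → Fin N) → ℝ) : Prop :=
  ∀ m, ρ m ∈ Set.Icc (1 : ℝ) 2 ∧ ∃ t : ℤ, ρ m = (t : ℝ) / N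

/-- The `δ'`-neighborhood `ℓ_m` of the selected `k`-face of the skeleton
`S_k(x_m, ρ(x_m))`. -/
def selFace {n : ℕ} (k N : ℕ) (z : Fin n → ℤ) (ρ : (Fin n → Fin N) → ℝ)
    (sel : (Fin n → Fin N) → FaceIdx n k) (δ' : ℝ) (m : Fin n → Fin N) : Set (Fin n → ℝ) :=
  Metric.cthickening δ' (kFace k (gridCenter N z m) (ρ m) (sel m))

/-- The linearized `k`-skeleton maximal operator: on the cell `Q_z(m)` it equals the
average of `f` over the `δ'`-neighborhood of the selected face. -/
def linMax {n : ℕ} (k N : ℕ) (z : Fin n → ℤ) (ρ : (Fin n → Fin N) → ℝ)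
    (sel : (Fin n → Fin N) → FaceIdx n k) (δ' : ℝ) (f : (Fin n → ℝ) → ℝ)
    (x : Fin n → ℝ) : ℝ :=
  ∑ m : Fin n → Fin N, Set.indicator (gridCell N z m)
    (fun _ => (volume (selFace k N z ρ sel δ' m)).toReal⁻¹ *
      ∫ y in selFace k N z ρ sel δ' m, f y) x

/-- The local skeleton `A_p` constant `[w]_{A^{S_k}_{p,ρ,z}}` (for `1 < p < ∞`). -/
def ApLoc {n : ℕ} (k N : ℕ) (z : Fin n → ℤ) (ρ : (Fin n → Fin N) → ℝ)
    (sel : (Fin n → Fin N) → FaceIdx n k) (w : (Fin n → ℝ) → ℝ) (p : ℝ) : ℝ≥0∞ :=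
  ⨆ m : Fin n → Fin N,
    ((volume (selFace k N z ρ sel ((N : ℝ)⁻¹) m))⁻¹ *
        ∫⁻ y in gridCell N z m, ENNReal.ofReal (w y)) *
      ((volume (selFace k N z ρ sel ((N : ℝ)⁻¹) m))⁻¹ *
        ∫⁻ y in selFace k N z ρ sel ((N : ℝ)⁻¹) m,
          ENNReal.ofReal (w y) ^ (1 - p / (p - 1))) ^ (p - 1)

/-- The local skeleton `A_1` constant `[w]_{A^{S_k}_{1,ρ,z}}`. -/
def A1Loc {n : ℕ} (k N : ℕ) (z : Fin n → ℤ) (ρ : (Fin n → Fin N) → ℝ)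
    (sel : (Fin n → Fin N) → FaceIdx n k) (w : (Fin n → ℝ) → ℝ) : ℝ≥0∞ :=
  ⨆ m : Fin n → Fin N,
    ((volume (selFace k N z ρ sel ((N : ℝ)⁻¹) m))⁻¹ *
        ∫⁻ y in gridCell N z m, ENNReal.ofReal (w y)) *
      essSup (fun y => (ENNReal.ofReal (w y))⁻¹)
        (volume.restrict (selFace k N z ρ sel ((N : ℝ)⁻¹) m))

/-- The global skeleton `A_p` constant `[w]_{A^{S_k}_p}` (with the `A_1` version at `p = 1`). -/
def ApGlobal {n : ℕ} (k N : ℕ)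
    (sel : (Fin n → ℤ) → ((Fin n → Fin N) → ℝ) → (Fin n → Fin N) → FaceIdx n k)
    (w : (Fin n → ℝ) → ℝ) (p : ℝ) : ℝ≥0∞ :=
  if p = 1 then
    ⨆ z : Fin n → ℤ, ⨆ ρ : {ρ : (Fin n → Fin N) → ℝ // inGamma N ρ},
      A1Loc k N z ρ.1 (sel z ρ.1) w
  else
    ⨆ z : Fin n → ℤ, ⨆ ρ : {ρ : (Fin n → Fin N) → ℝ // inGamma N ρ},
      ApLoc k N z ρ.1 (sel z ρ.1) w p

/-!
On the cell `Q_z(i)` the linearized operator is the average of `f` over `ℓ_i`. Hölder's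
inequality, with `f w^{1/p}` against `w^{-1/p}`, bounds `|⨍_{ℓ_i} f|^p w(Q_z(i))` by the `i`-th
term of `[w]_{A^S_{p,ρ,z}}` times `∫_{ℓ_i} |f|^p w`. Summing over the cells, every point lies in
at most `A δ^{-5/4}` of the sets `ℓ_i`, all of which lie in `7Q_z`; taking `p`-th roots gives the
factor `δ^{-5/(4p)}`.
-/

open Function

section WeightedAverage

variable {α : Type*} [MeasurableSpace α] {μ : Measure α} {p q : ℝ} {W : α → ℝ≥0∞}

theorem lintegral_enorm_le_Lp_withDensity_mul_Lq (hpq : p.HolderConjugate q)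
    (hW : AEMeasurable W μ) (hW0 : ∀ᵐ y ∂μ, W y ≠ 0) (hWt : ∀ᵐ y ∂μ, W y ≠ ⊤)
    {f : α → ℝ} (hf : AEMeasurable f μ) :
    ∫⁻ y, ‖f y‖ₑ ∂μ ≤
      (∫⁻ y, ‖f y‖ₑ ^ p ∂μ.withDensity W) ^ (1 / p) * (∫⁻ y, W y ^ (1 - q) ∂μ) ^ (1 / q) := by
  have hfactor : ∀ᵐ y ∂μ, ‖f y‖ₑ = ‖f y‖ₑ * W y ^ (1 / p) * W y ^ (-(1 / p)) := by
    filter_upwards [hW0, hWt] with y hy0 hyt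
    rw [mul_assoc, ← ENNReal.rpow_add _ _ hy0 hyt, add_neg_cancel, ENNReal.rpow_zero, mul_one]
  have hpow : ∀ y, (‖f y‖ₑ * W y ^ (1 / p)) ^ p = W y * ‖f y‖ₑ ^ p := fun y => by
    rw [ENNReal.mul_rpow_of_nonneg _ _ hpq.nonneg, ← ENNReal.rpow_mul,
      one_div_mul_cancel hpq.ne_zero, ENNReal.rpow_one, mul_comm]
  have hpow' : ∀ y, (W y ^ (-(1 / p))) ^ q = W y ^ (1 - q) := fun y => by
    rw [← ENNReal.rpow_mul, neg_mul, one_div_mul_eq_div, hpq.symm.div_conj_eq_sub_one, neg_sub]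
  rw [lintegral_withDensity_eq_lintegral_mul_non_measurable₀ μ hW
    (hWt.mono fun y hy => lt_top_iff_ne_top.mpr hy)]
  calc ∫⁻ y, ‖f y‖ₑ ∂μ = ∫⁻ y, ‖f y‖ₑ * W y ^ (1 / p) * W y ^ (-(1 / p)) ∂μ :=
        lintegral_congr_ae hfactor
    _ ≤ (∫⁻ y, (‖f y‖ₑ * W y ^ (1 / p)) ^ p ∂μ) ^ (1 / p) *
          (∫⁻ y, (W y ^ (-(1 / p))) ^ q ∂μ) ^ (1 / q) :=
        ENNReal.lintegral_mul_le_Lp_mul_Lq μ hpq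
          (hf.enorm.mul (hW.pow_const _)) (hW.pow_const _)
    _ = _ := by simp only [hpow, hpow', Pi.mul_apply]


theorem enorm_inv_toReal_mul_setIntegral_le {S : Set α} (hV0 : μ S ≠ 0) (hVt : μ S ≠ ⊤) (f : α → ℝ) :
    ‖(μ S).toReal⁻¹ * ∫ y in S, f y ∂μ‖ₑ ≤ (μ S)⁻¹ * ∫⁻ y in S, ‖f y‖ₑ ∂μ := by
  rw [enorm_mul, Real.enorm_of_nonneg (by positivity), ENNReal.ofReal_inv_of_pos
    (ENNReal.toReal_pos hV0 hVt), ENNReal.ofReal_toReal hVt]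
  exact mul_le_mul_right (enorm_integral_le_lintegral_enorm _) _

theorem enorm_setAverage_rpow_le (hpq : p.HolderConjugate q) {S : Set α} (hS : MeasurableSet S)
    (hV0 : μ S ≠ 0) (hVt : μ S ≠ ⊤) (hW : AEMeasurable W (μ.restrict S))
    (hWt : ∀ᵐ y ∂μ.restrict S, W y ≠ ⊤) (hJ : ∫⁻ y in S, W y ^ (1 - q) ∂μ ≠ ⊤) (f : α → ℝ) :
    ‖(μ S).toReal⁻¹ * ∫ y in S, f y ∂μ‖ₑ ^ p ≤
      (μ S)⁻¹ * ((μ S)⁻¹ * ∫⁻ y in S, W y ^ (1 - q) ∂μ) ^ (p - 1) *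
        ∫⁻ y in S, ‖f y‖ₑ ^ p ∂μ.withDensity W := by
  by_cases hf : Integrable f (μ.restrict S)
  swap
  · rw [integral_undef hf, mul_zero, enorm_zero, ENNReal.zero_rpow_of_pos hpq.pos]
    exact zero_le
  set V := μ S
  set J := ∫⁻ y in S, W y ^ (1 - q) ∂μ
  set I := ∫⁻ y in S, ‖f y‖ₑ ^ p ∂μ.withDensity W
  -- a zero of `W` on a set of positive measure would make `J` infinite, since `1 - q < 0`
  have hW0 : ∀ᵐ y ∂μ.restrict S, W y ≠ 0 := by
    filter_upwards [ae_lt_top' (hW.pow_const (1 - q)) hJ] with y hy hy0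
    rw [hy0, ENNReal.zero_rpow_of_neg (by linarith [hpq.symm.lt])] at hy
    exact hy.false
  have hholder : ∫⁻ y in S, ‖f y‖ₑ ∂μ ≤ I ^ (1 / p) * J ^ (1 / q) := by
    have := lintegral_enorm_le_Lp_withDensity_mul_Lq hpq hW hW0 hWt hf.aemeasurable
    rwa [← restrict_withDensity hS] at this
  have hp1 : 0 ≤ p - 1 := hpq.sub_one_pos.le
  have hsplit : V⁻¹ ^ p = V⁻¹ * V⁻¹ ^ (p - 1) := by
    simpa using ENNReal.rpow_add_of_nonneg (x := V⁻¹) 1 (p - 1) zero_le_one hp1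
  calc _ ≤ (V⁻¹ * (I ^ (1 / p) * J ^ (1 / q))) ^ p :=
        ENNReal.rpow_le_rpow ((enorm_inv_toReal_mul_setIntegral_le hV0 hVt f).trans
          (mul_le_mul_right hholder _)) hpq.nonneg
    _ = V⁻¹ * V⁻¹ ^ (p - 1) * (I ^ (1 / p * p) * J ^ (1 / q * p)) := by
        rw [ENNReal.mul_rpow_of_nonneg _ _ hpq.nonneg, ENNReal.mul_rpow_of_nonneg _ _ hpq.nonneg,
          ← ENNReal.rpow_mul, ← ENNReal.rpow_mul, hsplit]
    _ = V⁻¹ * (V⁻¹ * J) ^ (p - 1) * I := by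
        rw [one_div_mul_cancel hpq.ne_zero, ENNReal.rpow_one, one_div_mul_eq_div,
          hpq.div_conj_eq_sub_one, ENNReal.mul_rpow_of_nonneg _ _ hp1]
        ring

end WeightedAverage

theorem sum_setLIntegral_le_of_encard_le {α ι : Type*} [MeasurableSpace α] [Fintype ι]
    {ν : Measure α} {s : ι → Set α} (hs : ∀ i, MeasurableSet (s i)) {B : Set α}
    (hsB : ∀ i, s i ⊆ B) {M : ℕ} (hM : ∀ y, {i | y ∈ s i}.encard ≤ M) (g : α → ℝ≥0∞) :
    ∑ i, ∫⁻ y in s i, g y ∂ν ≤ M * ∫⁻ y in B, g y ∂ν :=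
  calc ∑ i, ∫⁻ y in s i, g y ∂ν = ∫⁻ y, g y ∂Measure.sum fun i => ν.restrict (s i) := by
        rw [lintegral_sum_measure, tsum_fintype]
    _ ≤ ∫⁻ y, g y ∂(M • ν.restrict (⋃ i, s i)) :=
        lintegral_mono' (Measure.sum_restrict_le hs hM) le_rfl
    _ ≤ M * ∫⁻ y in B, g y ∂ν := by
        rw [lintegral_smul_measure, nsmul_eq_mul]
        exact mul_le_mul_right (lintegral_mono' (Measure.restrict_mono (iUnion_subset hsB)
          le_rfl) le_rfl) _

theorem encard_setOf_mem_le_floor {α ι : Type*} [Finite ι] {s : ι → Set α} {K : ℝ}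
    (hK : ∀ i, ({j | (s i ∩ s j).Nonempty}.ncard : ℝ) ≤ K) (y : α) :
    {i | y ∈ s i}.encard ≤ ⌊K⌋₊ := by
  rcases {i | y ∈ s i}.eq_empty_or_nonempty with hy | ⟨i, hi⟩
  · simp [hy]
  calc {i | y ∈ s i}.encard ≤ {j | (s i ∩ s j).Nonempty}.encard :=
        encard_le_encard fun j hj => ⟨y, hi, hj⟩
    _ = {j | (s i ∩ s j).Nonempty}.ncard := (toFinite _).cast_ncard_eq.symm
    _ ≤ ⌊K⌋₊ := by exact_mod_cast Nat.le_floor (hK i)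

theorem lintegral_enorm_rpow_sum_indicator {α ι : Type*} [MeasurableSpace α] [Fintype ι]
    {ν : Measure α} {Q : ι → Set α} (hQ : Pairwise (Disjoint on Q))
    (hQm : ∀ i, MeasurableSet (Q i)) (c : ι → ℝ) {p : ℝ} (hp : 0 < p) :
    ∫⁻ x, ‖∑ i, (Q i).indicator (fun _ => c i) x‖ₑ ^ p ∂ν = ∑ i, ‖c i‖ₑ ^ p * ν (Q i) := by
  have hpointwise : ∀ x, ‖∑ i, (Q i).indicator (fun _ => c i) x‖ₑ ^ p =
      ∑ i, (Q i).indicator (fun _ => ‖c i‖ₑ ^ p) x := by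
    intro x
    by_cases hx : ∃ i, x ∈ Q i
    · obtain ⟨i, hi⟩ := hx
      have hother : ∀ j ≠ i, x ∉ Q j := fun j hj hxj =>
        Set.disjoint_left.mp (hQ hj) hxj hi
      rw [Finset.sum_eq_single i (fun j _ hj => indicator_of_notMem (hother j hj) _) (by simp),
        Finset.sum_eq_single i (fun j _ hj => indicator_of_notMem (hother j hj) _) (by simp),
        indicator_of_mem hi, indicator_of_mem hi]
    · simp [indicator_of_notMem (not_exists.mp hx _), ENNReal.zero_rpow_of_pos hp]
  simp_rw [hpointwise]
  rw [lintegral_finsetSum _ fun i _ => measurable_const.indicator (hQm i)]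
  exact Finset.sum_congr rfl fun i _ => lintegral_indicator_const (hQm i) _

theorem eLpNorm_le_of_lintegral_rpow_le {α β : Type*} [MeasurableSpace α] [MeasurableSpace β]
    {μ : Measure α} {ν : Measure β} {p : ℝ} (hp : 0 < p) {f : α → ℝ} {g : β → ℝ} {c : ℝ≥0∞}
    (h : ∫⁻ x, ‖f x‖ₑ ^ p ∂μ ≤ c * ∫⁻ y, ‖g y‖ₑ ^ p ∂ν) :
    eLpNorm f (ENNReal.ofReal p) μ ≤ c ^ (1 / p) * eLpNorm g (ENNReal.ofReal p) ν := by
  have hp0 : ENNReal.ofReal p ≠ 0 := ENNReal.ofReal_ne_zero_iff.mpr hp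
  rw [eLpNorm_eq_lintegral_rpow_enorm_toReal hp0 ENNReal.ofReal_ne_top,
    eLpNorm_eq_lintegral_rpow_enorm_toReal hp0 ENNReal.ofReal_ne_top, ENNReal.toReal_ofReal hp.le,
    ← ENNReal.mul_rpow_of_nonneg _ _ (by positivity)]
  exact ENNReal.rpow_le_rpow h (by positivity)

section Grid

variable {n k N : ℕ}

theorem kFace_nonempty (x : Fin n → ℝ) {r : ℝ} (hr : 0 ≤ r) (F : FaceIdx n k) :
    (kFace k x r F).Nonempty := by
  refine ⟨fun i => x i + (if F.2 i then r else -r), fun i _ => ?_, fun i _ => rfl⟩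
  dsimp only
  split_ifs <;> simp [abs_of_nonneg hr]

theorem kFace_subset_closedBall (x : Fin n → ℝ) {r : ℝ} (hr : 0 ≤ r) (F : FaceIdx n k) :
    kFace k x r F ⊆ closedBall x r := by
  intro y hy
  rw [mem_closedBall, dist_pi_le_iff hr]
  intro i
  rw [Real.dist_eq]
  by_cases hi : i ∈ F.1.1
  · exact hy.1 i hi
  · rw [hy.2 i hi]
    split_ifs <;> simp [abs_of_nonneg hr]

theorem sevenCube_eq_closedBall (z : Fin n → ℤ) :
    sevenCube z = closedBall (fun j => (z j : ℝ) + 1 / 2) (7 / 2) := by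
  ext y
  rw [mem_closedBall, dist_pi_le_iff (by norm_num)]
  rfl

theorem dist_gridCenter_le (z : Fin n → ℤ) (m : Fin n → Fin N) :
    dist (gridCenter N z m) (fun j => (z j : ℝ) + 1 / 2) ≤ 1 / 2 := by
  rw [dist_pi_le_iff (by norm_num)]
  intro j
  have hN : (0 : ℝ) < N := by exact_mod_cast (m j).pos
  have hm : (m j : ℝ) + 1 ≤ N := by exact_mod_cast (m j).isLt
  have h0 : 0 ≤ ((m j : ℝ) + 1 / 2) / N := by positivity
  have h1 : ((m j : ℝ) + 1 / 2) / N ≤ 1 := (div_le_one hN).mpr (by linarith)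
  rw [Real.dist_eq, gridCenter, abs_le]
  constructor <;> linarith

theorem selFace_subset_sevenCube {δ' : ℝ} (hδ0 : 0 ≤ δ') (hδ1 : δ' ≤ 1) (z : Fin n → ℤ)
    {ρ : (Fin n → Fin N) → ℝ} (hρ : inGamma N ρ) (sel : (Fin n → Fin N) → FaceIdx n k)
    (m : Fin n → Fin N) : selFace k N z ρ sel δ' m ⊆ sevenCube z := by
  obtain ⟨⟨hρ1, hρ2⟩, -⟩ := hρ m
  calc selFace k N z ρ sel δ' m ⊆ cthickening δ' (closedBall (gridCenter N z m) (ρ m)) :=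
        cthickening_subset_of_subset _ (kFace_subset_closedBall _ (by linarith) _)
    _ = closedBall (gridCenter N z m) (δ' + ρ m) := cthickening_closedBall hδ0 (by linarith) _
    _ ⊆ sevenCube z := by
        rw [sevenCube_eq_closedBall]
        exact closedBall_subset_closedBall' (by linarith [dist_gridCenter_le z m])

theorem volume_selFace_pos {δ' : ℝ} (hδ : 0 < δ') (z : Fin n → ℤ) {ρ : (Fin n → Fin N) → ℝ}
    (hρ : inGamma N ρ) (sel : (Fin n → Fin N) → FaceIdx n k) (m : Fin n → Fin N) :
    0 < volume (selFace k N z ρ sel δ' m) := by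
  obtain ⟨y, hy⟩ := kFace_nonempty (gridCenter N z m) (zero_le_one.trans (hρ m).1.1) (sel m)
  exact (measure_ball_pos _ y hδ).trans_le
    (measure_mono (ball_subset_closedBall.trans (closedBall_subset_cthickening hy δ')))

theorem volume_selFace_lt_top {δ' : ℝ} (hδ0 : 0 ≤ δ') (hδ1 : δ' ≤ 1) (z : Fin n → ℤ)
    {ρ : (Fin n → Fin N) → ℝ} (hρ : inGamma N ρ) (sel : (Fin n → Fin N) → FaceIdx n k)
    (m : Fin n → Fin N) : volume (selFace k N z ρ sel δ' m) < ⊤ := by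
  refine (measure_mono (selFace_subset_sevenCube hδ0 hδ1 z hρ sel m)).trans_lt ?_
  rw [sevenCube_eq_closedBall]
  exact measure_closedBall_lt_top

theorem measurableSet_gridCell (z : Fin n → ℤ) (m : Fin n → Fin N) :
    MeasurableSet (gridCell N z m) := by
  have h : gridCell N z m =
      univ.pi fun j => Ico ((z j : ℝ) + (m j : ℝ) / N) ((z j : ℝ) + ((m j : ℝ) + 1) / N) := by
    ext y
    simp [gridCell, mem_pi, mem_Ico]
  rw [h]
  exact MeasurableSet.univ_pi fun j => measurableSet_Ico

theorem pairwise_disjoint_gridCell (z : Fin n → ℤ) :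
    Pairwise (Disjoint on gridCell (n := n) N z) := by
  have hle : ∀ a b : Fin n → Fin N, ∀ y ∈ gridCell N z a, y ∈ gridCell N z b → ∀ j, a j ≤ b j := by
    intro a b y ha hb j
    have hN : (0 : ℝ) < N := by exact_mod_cast (a j).pos
    have hlt : (a j : ℝ) < b j + 1 := by
      have := (ha j).1.trans_lt (hb j).2
      rwa [add_lt_add_iff_left, div_lt_div_iff_of_pos_right hN] at this
    exact Fin.le_iff_val_le_val.mpr (by exact_mod_cast Nat.lt_succ_iff.mp (by exact_mod_cast hlt))
  intro a b hab
  refine Set.disjoint_left.mpr fun y ha hb => hab (funext fun j => ?_)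
  exact le_antisymm (hle a b y ha hb j) (hle b a y hb ha j)

end Grid

section LinearizedOperator

variable {n k N : ℕ} {z : Fin n → ℤ} {ρ : (Fin n → Fin N) → ℝ}
  {sel : (Fin n → Fin N) → FaceIdx n k} {w : (Fin n → ℝ) → ℝ} {p : ℝ}

theorem le_ApLoc (m : Fin n → Fin N) :
    ((volume (selFace k N z ρ sel ((N : ℝ)⁻¹) m))⁻¹ *
        ∫⁻ y in gridCell N z m, ENNReal.ofReal (w y)) *
      ((volume (selFace k N z ρ sel ((N : ℝ)⁻¹) m))⁻¹ *
        ∫⁻ y in selFace k N z ρ sel ((N : ℝ)⁻¹) m,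
          ENNReal.ofReal (w y) ^ (1 - p / (p - 1))) ^ (p - 1) ≤
      ApLoc k N z ρ sel w p := by
  unfold ApLoc
  exact le_iSup_of_le m le_rfl

theorem enorm_average_rpow_mul_le_ApLoc (hN : 0 < N) (hp : 1 < p) (hρ : inGamma N ρ)
    (hw : AEMeasurable w) (hAp : ApLoc k N z ρ sel w p ≠ ⊤) (f : (Fin n → ℝ) → ℝ)
    (m : Fin n → Fin N) :
    ‖(volume (selFace k N z ρ sel (N : ℝ)⁻¹ m)).toReal⁻¹ *
        ∫ y in selFace k N z ρ sel (N : ℝ)⁻¹ m, f y‖ₑ ^ p * wMeasure w (gridCell N z m) ≤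
      ApLoc k N z ρ sel w p * ∫⁻ y in selFace k N z ρ sel (N : ℝ)⁻¹ m, ‖f y‖ₑ ^ p ∂wMeasure w := by
  set S := selFace k N z ρ sel (N : ℝ)⁻¹ m
  have hδ : (0 : ℝ) < (N : ℝ)⁻¹ := by positivity
  have hδ1 : (N : ℝ)⁻¹ ≤ 1 := inv_le_one_of_one_le₀ (by exact_mod_cast hN)
  have hV0 : volume S ≠ 0 := (volume_selFace_pos hδ z hρ sel m).ne'
  have hVinv0 : (volume S)⁻¹ ≠ 0 :=
    ENNReal.inv_ne_zero.mpr (volume_selFace_lt_top hδ.le hδ1 z hρ sel m).ne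
  rw [wMeasure, withDensity_apply _ (measurableSet_gridCell z m)]
  set c := ∫⁻ y in gridCell N z m, ENNReal.ofReal (w y)
  rcases eq_or_ne c 0 with hc | hc
  · simp [hc]
  have hterm := le_ApLoc (k := k) (z := z) (ρ := ρ) (sel := sel) (w := w) (p := p) m
  -- for a cell of positive weight, finiteness of the `A_p` constant forces `w ^ (1 - p')` to be
  -- integrable on the selected face
  have hJ : ∫⁻ y in S, ENNReal.ofReal (w y) ^ (1 - p / (p - 1)) ≠ ⊤ := by
    intro hJ
    rw [hJ, ENNReal.mul_top hVinv0, ENNReal.top_rpow_of_pos (by linarith),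
      ENNReal.mul_top (mul_ne_zero hVinv0 hc), top_le_iff] at hterm
    exact hAp hterm
  calc _ ≤ (volume S)⁻¹ * ((volume S)⁻¹ * ∫⁻ y in S, ENNReal.ofReal (w y) ^ (1 - p / (p - 1))) ^
          (p - 1) * (∫⁻ y in S, ‖f y‖ₑ ^ p ∂wMeasure w) * c :=
        mul_le_mul_left (enorm_setAverage_rpow_le (Real.HolderConjugate.conjExponent hp)
          isClosed_cthickening.measurableSet hV0 (volume_selFace_lt_top hδ.le hδ1 z hρ sel m).ne
          hw.ennreal_ofReal.restrict (ae_of_all _ fun _ => ENNReal.ofReal_ne_top) hJ f) c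
    _ ≤ _ := by
        rw [mul_right_comm, mul_right_comm _ _ c]
        exact mul_le_mul_left hterm _

theorem lintegral_linMax_rpow_le (hN : 0 < N) (hp : 1 < p) (hρ : inGamma N ρ)
    (hw : AEMeasurable w) (hAp : ApLoc k N z ρ sel w p ≠ ⊤) {M : ℕ}
    (hM : ∀ y, {m | y ∈ selFace k N z ρ sel (N : ℝ)⁻¹ m}.encard ≤ M) (f : (Fin n → ℝ) → ℝ) :
    ∫⁻ x, ‖linMax k N z ρ sel (N : ℝ)⁻¹ f x‖ₑ ^ p ∂(wMeasure w).restrict (unitCube z) ≤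
      ApLoc k N z ρ sel w p * M * ∫⁻ y, ‖f y‖ₑ ^ p ∂(wMeasure w).restrict (sevenCube z) := by
  have hδ : (0 : ℝ) ≤ (N : ℝ)⁻¹ := by positivity
  have hδ1 : (N : ℝ)⁻¹ ≤ 1 := inv_le_one_of_one_le₀ (by exact_mod_cast hN)
  calc _ ≤ ∫⁻ x, ‖linMax k N z ρ sel (N : ℝ)⁻¹ f x‖ₑ ^ p ∂wMeasure w :=
        lintegral_mono' Measure.restrict_le_self le_rfl
    _ = ∑ m, ‖(volume (selFace k N z ρ sel (N : ℝ)⁻¹ m)).toReal⁻¹ *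
          ∫ y in selFace k N z ρ sel (N : ℝ)⁻¹ m, f y‖ₑ ^ p * wMeasure w (gridCell N z m) :=
        lintegral_enorm_rpow_sum_indicator (pairwise_disjoint_gridCell z)
          (measurableSet_gridCell z) _ (by linarith)
    _ ≤ ∑ m, ApLoc k N z ρ sel w p *
          ∫⁻ y in selFace k N z ρ sel (N : ℝ)⁻¹ m, ‖f y‖ₑ ^ p ∂wMeasure w :=
        Finset.sum_le_sum fun m _ => enorm_average_rpow_mul_le_ApLoc hN hp hρ hw hAp f m
    _ ≤ ApLoc k N z ρ sel w p * (M * ∫⁻ y in sevenCube z, ‖f y‖ₑ ^ p ∂wMeasure w) := by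
        rw [← Finset.mul_sum]
        exact mul_le_mul_right (sum_setLIntegral_le_of_encard_le
          (fun m => isClosed_cthickening.measurableSet)
          (selFace_subset_sevenCube hδ hδ1 z hρ sel) hM _) _
    _ = _ := (mul_assoc _ _ _).symm

end LinearizedOperator

theorem natCast_floor_rpow_le {A δ p : ℝ} (hA : 0 ≤ A) (hδ : 0 ≤ δ) (hp : 0 < p) :
    (⌊A * δ ^ (-(5 : ℝ) / 4)⌋₊ : ℝ≥0∞) ^ (1 / p) ≤
      ENNReal.ofReal (A ^ (1 / p) * δ ^ (-(5 : ℝ) / (4 * p))) := by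
  have hK : 0 ≤ A * δ ^ (-(5 : ℝ) / 4) := by positivity
  calc (⌊A * δ ^ (-(5 : ℝ) / 4)⌋₊ : ℝ≥0∞) ^ (1 / p)
        ≤ ENNReal.ofReal (A * δ ^ (-(5 : ℝ) / 4)) ^ (1 / p) := by
        rw [← ENNReal.ofReal_natCast]
        gcongr
        exact Nat.floor_le hK
    _ = ENNReal.ofReal (A ^ (1 / p) * δ ^ (-(5 : ℝ) / (4 * p))) := by
        rw [ENNReal.ofReal_rpow_of_nonneg hK (by positivity), Real.mul_rpow hA (by positivity),
          ← Real.rpow_mul hδ]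
        ring_nf

theorem sufficient_local_general (p : ℝ) (hp : 1 < p)
    (A : ℝ) (hA : 0 < A) :
    ∃ C : ℝ, 0 < C ∧
      ∀ (N : ℕ), 1 < N → ∀ (δ : ℝ), δ = (N : ℝ)⁻¹ →
      ∀ (z : Fin 2 → ℤ) (ρ : (Fin 2 → Fin N) → ℝ), inGamma N ρ →
      ∀ sel : (Fin 2 → Fin N) → FaceIdx 2 1,
      (∀ m, ({m' : Fin 2 → Fin N |
          (selFace 1 N z ρ sel δ m ∩ selFace 1 N z ρ sel δ m').Nonempty}.ncard : ℝ) ≤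
        A * δ ^ (-(5 : ℝ) / 4)) →
      ∀ w : (Fin 2 → ℝ) → ℝ, (∀ x, 0 ≤ w x) → LocallyIntegrable w volume →
      ApLoc 1 N z ρ sel w p ≠ ⊤ →
      ∀ f : (Fin 2 → ℝ) → ℝ,
        eLpNorm (linMax 1 N z ρ sel δ f) (ENNReal.ofReal p)
            ((wMeasure w).restrict (unitCube z)) ≤
          ENNReal.ofReal (C * δ ^ (-(5 : ℝ) / (4 * p))) * ApLoc 1 N z ρ sel w p ^ (1 / p) *
            eLpNorm f (ENNReal.ofReal p) ((wMeasure w).restrict (sevenCube z)) := by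
  have hp0 : 0 < p := by linarith
  refine ⟨A ^ (1 / p), by positivity, ?_⟩
  rintro N hN δ rfl z ρ hρ sel hsel w - hw hAp f
  have hlin := lintegral_linMax_rpow_le (by omega) hp hρ hw.aestronglyMeasurable.aemeasurable hAp
    (encard_setOf_mem_le_floor hsel) f
  refine (eLpNorm_le_of_lintegral_rpow_le hp0 hlin).trans ?_
  rw [ENNReal.mul_rpow_of_nonneg _ _ (by positivity), mul_comm (ApLoc _ _ _ _ _ _ _ ^ _)]
  gcongr
  exact natCast_floor_rpow_le hA.le (by positivity) hp0

/-- local weighted bound for the linearized skeleton maximal operator: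
`‖M̃_{ρ,δ} f‖_{L^p(Q_z,w)} ≤ C δ^{-5/(4p)} [w]_{A^S_{p,ρ,z}}^{1/p} ‖f‖_{L^p(7Q_z,w)}`. -/
theorem sufficient_local (p : ℝ) (hp : 1 < p) (hp' : ∃ m : ℕ, p / (p - 1) = (m : ℝ))
    (A : ℝ) (hA : 0 < A) :
    ∃ C : ℝ, 0 < C ∧
      ∀ (N : ℕ), 1 < N → ∀ (δ : ℝ), δ = (N : ℝ)⁻¹ →
      ∀ (z : Fin 2 → ℤ) (ρ : (Fin 2 → Fin N) → ℝ), inGamma N ρ →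
      ∀ sel : (Fin 2 → Fin N) → FaceIdx 2 1,
      (∀ m, ({m' : Fin 2 → Fin N |
          (selFace 1 N z ρ sel δ m ∩ selFace 1 N z ρ sel δ m').Nonempty}.ncard : ℝ) ≤
        A * δ ^ (-(5 : ℝ) / 4)) →
      ∀ w : (Fin 2 → ℝ) → ℝ, (∀ x, 0 ≤ w x) → LocallyIntegrable w volume →
      ApLoc 1 N z ρ sel w p ≠ ⊤ →
      ∀ f : (Fin 2 → ℝ) → ℝ,
        eLpNorm (linMax 1 N z ρ sel δ f) (ENNReal.ofReal p)
            ((wMeasure w).restrict (unitCube z)) ≤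
          ENNReal.ofReal (C * δ ^ (-(5 : ℝ) / (4 * p))) * ApLoc 1 N z ρ sel w p ^ (1 / p) *
            eLpNorm f (ENNReal.ofReal p) ((wMeasure w).restrict (sevenCube z)) :=
  sufficient_local_general p hp A hA
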